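/- For every t ∈ (1,2), every p ∈ ℕ with p ≥ 1, and every R > 0, there exists a constant D = D(R,p,t) such that for every p-periodic potential V : ℤ → ℝ with ‖V‖_∞ ≤ R, one has ∫_{{E ∈ ℝ : |Δ(E)| < 2}} ( |Δ′(E)| / (p · √(4 − Δ(E)²)) )^t dE ≤ D, where Δ is the discriminant of V and Δ′ its derivative. (The integrand is the t-th power of |dk/dE|, where k is the Floquet quasimomentum determined by Δ(E) = 2cos(kp).) -/

import Mathlib

open MeasureTheory

/-- The transfer matrix over `n` sites: `T_n^{(E,V)} = S_{n-1} ⋯ S_0`, where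
`S_i^{(E,V)} = !![E - V i, -1; 1, 0]`. -/
def transferMatrix (E : ℝ) (V : ℤ → ℝ) : ℕ → Matrix (Fin 2) (Fin 2) ℝ
  | 0 => 1
  | n + 1 => !![E - V n, -1; 1, 0] * transferMatrix E V n

/-- The discriminant `Δ(E) = tr T_p^{(E,V)}` of a `p`-periodic potential. -/
def discriminant (V : ℤ → ℝ) (p : ℕ) (E : ℝ) : ℝ :=
  (transferMatrix E V p).trace

/-!
The discriminant `Δ` is a monic real polynomial of degree `p` whose coefficients are bounded in
terms of `R` and `p`. Hence the bands `{|Δ| < 2}` lie in a fixed interval, on which `|Δ'| ≤ M`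
uniformly in `V`, and since `t > 1` the integrand is at most
`M ^ (t - 1) * |Δ'(E)| * (4 - Δ(E)²) ^ (-t/2)`. Off the at most `p` zeros of `Δ'` the line splits
into at most `p + 1` intervals on which `Δ` is injective, and on each of them the substitution
`y = Δ(E)` bounds the integral by `∫_{-2}^{2} (4 - y²) ^ (-t/2) dy`, which is finite since `t < 2`.
-/

open Polynomial Set
open scoped ENNReal

noncomputable def transferPoly (V : ℤ → ℝ) : ℕ → Matrix (Fin 2) (Fin 2) ℝ[X]
  | 0 => 1
  | n + 1 => !![X - C (V n), -1; 1, 0] * transferPoly V n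

noncomputable def discriminantPoly (V : ℤ → ℝ) (p : ℕ) : ℝ[X] :=
  (transferPoly V p).trace

section TransferPoly

variable (V : ℤ → ℝ)

theorem transferPoly_map_eval (E : ℝ) (n : ℕ) :
    (transferPoly V n).map (eval E) = transferMatrix E V n := by
  induction n with
  | zero => simp [transferPoly, transferMatrix]
  | succ n ih =>
    rw [transferPoly, transferMatrix, ← ih, ← coe_evalRingHom, Matrix.map_mul]
    congr 1
    ext i j
    fin_cases i <;> fin_cases j <;> simp

theorem discriminant_eq_eval (p : ℕ) (E : ℝ) :
    discriminant V p E = (discriminantPoly V p).eval E := by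
  rw [discriminant, discriminantPoly, ← transferPoly_map_eval, ← coe_evalRingHom,
    AddMonoidHom.map_trace]

theorem transferPoly_succ_apply (n : ℕ) :
    transferPoly V (n + 1) 0 0 = (X - C (V n)) * transferPoly V n 0 0 - transferPoly V n 1 0 ∧
    transferPoly V (n + 1) 0 1 = (X - C (V n)) * transferPoly V n 0 1 - transferPoly V n 1 1 ∧
    transferPoly V (n + 1) 1 0 = transferPoly V n 0 0 ∧
    transferPoly V (n + 1) 1 1 = transferPoly V n 0 1 := by
  simp [transferPoly, Matrix.mul_apply, sub_eq_add_neg]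

theorem transferPoly_degree (n : ℕ) :
    (transferPoly V n 0 0).Monic ∧ (transferPoly V n 0 0).degree = n ∧
    (transferPoly V n 0 1).degree < n ∧ (transferPoly V n 1 0).degree < n ∧
    (transferPoly V n 1 1).degree ≤ n := by
  induction n with
  | zero => simp [transferPoly]
  | succ n ih =>
    obtain ⟨h00, h01, h10, h11⟩ := transferPoly_succ_apply V n
    obtain ⟨hmon, hdeg, hdeg01, hdeg10, hdeg11⟩ := ih
    have hlt : (n : WithBot ℕ) < ↑(n + 1) := by exact_mod_cast n.lt_succ_self
    have hX : ((X - C (V n)) * transferPoly V n 0 0).degree = ↑(n + 1) := by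
      rw [degree_mul, degree_X_sub_C, hdeg, add_comm]; rfl
    have hX01 : ((X - C (V n)) * transferPoly V n 0 1).degree < ↑(n + 1) := by
      rw [degree_mul, degree_X_sub_C, add_comm]
      exact WithBot.add_lt_add_right (by simp) hdeg01
    refine ⟨?_, ?_, ?_, ?_, ?_⟩
    · rw [h00]
      exact ((monic_X_sub_C _).mul hmon).sub_of_left (by rw [hX]; exact hdeg10.trans hlt)
    · rw [h00, degree_sub_eq_left_of_degree_lt (by rw [hX]; exact hdeg10.trans hlt), hX]
    · rw [h01]
      exact (degree_sub_le _ _).trans_lt (max_lt hX01 (hdeg11.trans_lt hlt))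
    · rw [h10, hdeg]; exact hlt
    · rw [h11]; exact (hdeg01.trans hlt).le

theorem discriminantPoly_monic {p : ℕ} (hp : 1 ≤ p) :
    (discriminantPoly V p).Monic ∧ (discriminantPoly V p).natDegree = p := by
  obtain ⟨q, rfl⟩ := Nat.exists_eq_add_of_le' hp
  obtain ⟨hmon, hdeg, -, -, -⟩ := transferPoly_degree V (q + 1)
  have h11 : (transferPoly V (q + 1) 1 1).degree < (transferPoly V (q + 1) 0 0).degree := by
    rw [(transferPoly_succ_apply V q).2.2.2, hdeg]
    exact (transferPoly_degree V q).2.2.1.trans (by exact_mod_cast q.lt_succ_self)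
  rw [discriminantPoly, Matrix.trace_fin_two]
  exact ⟨hmon.add_of_left h11,
    natDegree_eq_of_degree_eq_some (by rw [degree_add_eq_left_of_degree_lt h11, hdeg])⟩

end TransferPoly

theorem abs_coeff_X_sub_C_mul_sub_le {v R B : ℝ} {a b : ℝ[X]} (hv : |v| ≤ R)
    (ha : ∀ i, |a.coeff i| ≤ B) (hb : ∀ i, |b.coeff i| ≤ B) (i : ℕ) :
    |((X - C v) * a - b).coeff i| ≤ (2 + R) * B := by
  have hXa : |(X * a).coeff i| ≤ B := by
    cases i with
    | zero => simpa using (abs_nonneg _).trans (ha 0)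
    | succ j => rw [coeff_X_mul]; exact ha j
  have hva : |v * a.coeff i| ≤ R * B := by
    rw [abs_mul]; exact mul_le_mul hv (ha i) (abs_nonneg _) ((abs_nonneg _).trans hv)
  calc |((X - C v) * a - b).coeff i| = |(X * a).coeff i - v * a.coeff i - b.coeff i| := by
        rw [sub_mul, coeff_sub, coeff_sub, coeff_C_mul]
    _ ≤ |(X * a).coeff i| + |v * a.coeff i| + |b.coeff i| :=
        (abs_sub _ _).trans (add_le_add_left (abs_sub _ _) _)
    _ ≤ (2 + R) * B := by linarith [hb i]

theorem abs_coeff_transferPoly_le {V : ℤ → ℝ} {R : ℝ} (hV : ∀ n : ℤ, |V n| ≤ R) (n : ℕ)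
    (k l : Fin 2) (i : ℕ) : |(transferPoly V n k l).coeff i| ≤ (2 + R) ^ n := by
  have hR : 0 ≤ R := (abs_nonneg _).trans (hV 0)
  induction n generalizing k l i with
  | zero =>
    fin_cases k <;> fin_cases l <;> simp [transferPoly, coeff_one] <;> split_ifs <;> norm_num
  | succ n ih =>
    obtain ⟨h00, h01, h10, h11⟩ := transferPoly_succ_apply V n
    have hmono : (2 + R) ^ n ≤ (2 + R) ^ (n + 1) := pow_le_pow_right₀ (by linarith) n.le_succ
    rw [pow_succ']
    fin_cases k <;> fin_cases l <;> simp only [Fin.zero_eta, Fin.mk_one]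
    · rw [h00]; exact abs_coeff_X_sub_C_mul_sub_le (hV n) (ih 0 0) (ih 1 0) i
    · rw [h01]; exact abs_coeff_X_sub_C_mul_sub_le (hV n) (ih 0 1) (ih 1 1) i
    · rw [h10, ← pow_succ']; exact (ih 0 0 i).trans hmono
    · rw [h11, ← pow_succ']; exact (ih 0 1 i).trans hmono

theorem abs_coeff_discriminantPoly_le {V : ℤ → ℝ} {R : ℝ} (hV : ∀ n : ℤ, |V n| ≤ R) (p i : ℕ) :
    |(discriminantPoly V p).coeff i| ≤ 2 * (2 + R) ^ p := by
  rw [discriminantPoly, Matrix.trace_fin_two, coeff_add, two_mul]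
  exact (abs_add_le _ _).trans
    (add_le_add (abs_coeff_transferPoly_le hV p 0 0 i) (abs_coeff_transferPoly_le hV p 1 1 i))

theorem abs_eval_le_of_abs_coeff_le {q : ℝ[X]} {n : ℕ} {B K x : ℝ} (hq : q.natDegree ≤ n)
    (hB : ∀ i, |q.coeff i| ≤ B) (hK : 1 ≤ K) (hx : |x| ≤ K) :
    |q.eval x| ≤ (n + 1) * B * K ^ n := by
  have hB0 : 0 ≤ B := (abs_nonneg _).trans (hB 0)
  rw [eval_eq_sum_range' (Nat.lt_succ_of_le hq)]
  calc |∑ i ∈ Finset.range (n + 1), q.coeff i * x ^ i|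
      ≤ ∑ i ∈ Finset.range (n + 1), |q.coeff i * x ^ i| := Finset.abs_sum_le_sum_abs _ _
    _ ≤ ∑ _i ∈ Finset.range (n + 1), B * K ^ n := by
      refine Finset.sum_le_sum fun i hi => ?_
      rw [abs_mul, abs_pow]
      have hxi : |x| ^ i ≤ K ^ n := (pow_le_pow_left₀ (abs_nonneg x) hx i).trans
        (pow_le_pow_right₀ hK (Nat.lt_succ_iff.mp (Finset.mem_range.mp hi)))
      exact mul_le_mul (hB i) hxi (by positivity) hB0
    _ = (n + 1) * B * K ^ n := by
      rw [Finset.sum_const, Finset.card_range, nsmul_eq_mul]; push_cast; ring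

theorem abs_lt_of_abs_eval_lt {P : ℝ[X]} (hP : P.Monic) (hdeg : 0 < P.natDegree) {B c x : ℝ}
    (hB : ∀ i, |P.coeff i| ≤ B) (hc : 1 ≤ c) (hPx : |P.eval x| < c) :
    |x| < P.natDegree * B + c := by
  have hB0 : 0 ≤ B := (abs_nonneg _).trans (hB 0)
  obtain ⟨d, hd⟩ := Nat.exists_eq_add_of_lt hdeg
  rw [zero_add] at hd
  by_contra! hx
  have hx1 : 1 ≤ |x| := by
    have : 0 ≤ (P.natDegree : ℝ) * B := by positivity
    linarith
  have hlead : |P.eraseLead.eval x| ≤ (d + 1) * B * |x| ^ d := by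
    refine abs_eval_le_of_abs_coeff_le ?_ (fun i => ?_) hx1 le_rfl
    · exact (eraseLead_natDegree_le P).trans (by omega)
    · rw [eraseLead_coeff]; split_ifs
      · simpa using hB0
      · exact hB i
  have hsplit : P.eval x = P.eraseLead.eval x + x ^ (d + 1) := by
    conv_lhs => rw [← eraseLead_add_monomial_natDegree_leadingCoeff P]
    rw [hP.leadingCoeff, hd, eval_add, eval_monomial, one_mul]
  have hgap : c ≤ |x| - (d + 1) * B := by rw [hd] at hx; push_cast at hx; linarith
  have hmain : 1 * c ≤ |x| ^ d * (|x| - (d + 1) * B) :=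
    mul_le_mul (one_le_pow₀ hx1) hgap (by linarith) (by positivity)
  have habs := abs_sub_abs_le_abs_sub (x ^ (d + 1)) (-P.eraseLead.eval x)
  rw [abs_neg, sub_neg_eq_add, add_comm (x ^ (d + 1)), ← hsplit, abs_pow, pow_succ] at habs
  linarith

theorem abs_coeff_derivative_le {q : ℝ[X]} {n : ℕ} {B : ℝ} (hq : q.natDegree ≤ n)
    (hB : ∀ i, |q.coeff i| ≤ B) (i : ℕ) : |(derivative q).coeff i| ≤ n * B := by
  have hB0 : 0 ≤ B := (abs_nonneg _).trans (hB 0)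
  rw [coeff_derivative]
  rcases le_or_gt (i + 1) n with h | h
  · rw [abs_mul, mul_comm (n : ℝ)]
    exact mul_le_mul (hB _) (by rw [abs_of_nonneg (by positivity)]; exact_mod_cast h)
      (abs_nonneg _) hB0
  · rw [coeff_eq_zero_of_natDegree_lt (by omega)]
    simp only [zero_mul, abs_zero]; positivity

theorem hasDerivAt_discriminant (V : ℤ → ℝ) (p : ℕ) (E : ℝ) :
    HasDerivAt (discriminant V p) ((derivative (discriminantPoly V p)).eval E) E := by
  rw [show discriminant V p = fun E => (discriminantPoly V p).eval E from
    funext (discriminant_eq_eval V p)]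
  exact (discriminantPoly V p).hasDerivAt E

theorem exists_abs_deriv_discriminant_le {p : ℕ} (hp : 1 ≤ p) (R : ℝ) :
    ∃ M : ℝ, ∀ V : ℤ → ℝ, (∀ n : ℤ, |V n| ≤ R) → ∀ E, |discriminant V p E| < 2 →
      |deriv (discriminant V p) E| ≤ M := by
  set B : ℝ := 2 * (2 + R) ^ p
  set K : ℝ := p * B + 2
  refine ⟨(p + 1) * (p * B) * K ^ p, fun V hV E hE => ?_⟩
  obtain ⟨hmon, hdeg⟩ := discriminantPoly_monic V hp
  have hcoeff := abs_coeff_discriminantPoly_le hV p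
  have hK : 1 ≤ K := by
    have : 0 ≤ (p : ℝ) * B := mul_nonneg p.cast_nonneg ((abs_nonneg _).trans (hcoeff 0))
    linarith
  have hEK : |E| ≤ K := by
    rw [discriminant_eq_eval] at hE
    simpa only [hdeg] using (abs_lt_of_abs_eval_lt hmon (by omega) hcoeff one_le_two hE).le
  rw [(hasDerivAt_discriminant V p E).deriv]
  exact abs_eval_le_of_abs_coeff_le ((natDegree_derivative_le _).trans (by omega))
    (abs_coeff_derivative_le hdeg.le hcoeff) hK hEK

theorem exists_finset_deriv_discriminant_ne_zero (V : ℤ → ℝ) {p : ℕ} (hp : 1 ≤ p) :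
    ∃ F : Finset ℝ, F.card ≤ p ∧ ∀ x ∉ F, deriv (discriminant V p) x ≠ 0 := by
  set P := discriminantPoly V p
  have hdeg : P.natDegree = p := (discriminantPoly_monic V hp).2
  have hP' : derivative P ≠ 0 := derivative_ne_zero.mpr (by omega)
  refine ⟨(derivative P).roots.toFinset, ?_, fun x hx => ?_⟩
  · exact (Multiset.toFinset_card_le _).trans
      ((card_roots' _).trans ((natDegree_derivative_le _).trans (by omega)))
  · rw [(hasDerivAt_discriminant V p x).deriv]
    exact fun h => hx (Multiset.mem_toFinset.mpr ((mem_roots hP').mpr h))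

section ChangeOfVariables

variable {f f' : ℝ → ℝ} {U S : Set ℝ}

theorem injOn_of_hasDerivAt_ne_zero (hf : ∀ x, HasDerivAt f (f' x) x) (hU : Convex ℝ U)
    (hf' : ∀ x ∈ U, f' x ≠ 0) : InjOn f U := by
  intro x hx y hy hxy
  by_contra hne
  wlog hlt : x < y generalizing x y
  · exact this hy hx hxy.symm (Ne.symm hne) (lt_of_le_of_ne (not_lt.mp hlt) (Ne.symm hne))
  obtain ⟨c, hc, hc0⟩ := exists_hasDerivAt_eq_zero hlt
    (fun z _ => (hf z).continuousAt.continuousWithinAt) hxy (fun z _ => hf z)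
  exact hf' c (hU.ordConnected.out hx hy (Ioo_subset_Icc_self hc)) hc0

theorem setLIntegral_abs_deriv_mul_comp_le (hf : ∀ x, HasDerivAt f (f' x) x) (hU : Convex ℝ U)
    (hUm : MeasurableSet U) (hS : MeasurableSet S) (hf' : ∀ x ∈ U, f' x ≠ 0) (g : ℝ → ℝ≥0∞) :
    ∫⁻ x in U ∩ f ⁻¹' S, ENNReal.ofReal |f' x| * g (f x) ≤ ∫⁻ y in S, g y := by
  have hcont : Continuous f := continuous_iff_continuousAt.mpr fun x => (hf x).continuousAt
  rw [← lintegral_image_eq_lintegral_abs_deriv_mul (hUm.inter (hcont.measurable hS))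
    (fun x _ => (hf x).hasDerivWithinAt)
    ((injOn_of_hasDerivAt_ne_zero hf hU hf').mono inter_subset_left)]
  exact lintegral_mono_set (image_subset_iff.mpr inter_subset_right)

theorem setLIntegral_abs_deriv_mul_comp_le_card_add_one (hf : ∀ x, HasDerivAt f (f' x) x)
    (hU : Convex ℝ U) (hUm : MeasurableSet U) (hS : MeasurableSet S) (F : Finset ℝ)
    (hf' : ∀ x ∈ U, x ∉ F → f' x ≠ 0) (g : ℝ → ℝ≥0∞) :
    ∫⁻ x in U ∩ f ⁻¹' S, ENNReal.ofReal |f' x| * g (f x) ≤ (F.card + 1) * ∫⁻ y in S, g y := by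
  induction F using Finset.induction_on_max generalizing U with
  | empty =>
    simpa using setLIntegral_abs_deriv_mul_comp_le hf hU hUm hS
      (fun x hx => hf' x hx (Finset.notMem_empty x)) g
  | insert a F hlt ih =>
    have hleft := ih (hU.inter (convex_Iio a)) (hUm.inter measurableSet_Iio)
      (fun x hx hxF => hf' x hx.1 (by simp [hxF, (mem_Iio.mp hx.2).ne]))
    have hright := setLIntegral_abs_deriv_mul_comp_le hf (hU.inter (convex_Ioi a))
      (hUm.inter measurableSet_Ioi) hS
      (fun x hx => hf' x hx.1 (by
        simp only [Finset.mem_insert, not_or]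
        exact ⟨hx.2.ne', fun hxF => (hlt x hxF).not_gt hx.2⟩)) g
    have hcover : U ∩ f ⁻¹' S ⊆
        U ∩ Iio a ∩ f ⁻¹' S ∪ (U ∩ Ioi a ∩ f ⁻¹' S ∪ {a}) := by
      rintro x ⟨hxU, hxS⟩
      rcases lt_trichotomy x a with h | rfl | h
      · exact Or.inl ⟨⟨hxU, h⟩, hxS⟩
      · exact Or.inr (Or.inr rfl)
      · exact Or.inr (Or.inl ⟨⟨hxU, h⟩, hxS⟩)
    calc ∫⁻ x in U ∩ f ⁻¹' S, ENNReal.ofReal |f' x| * g (f x)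
        ≤ ∫⁻ x in U ∩ Iio a ∩ f ⁻¹' S ∪ (U ∩ Ioi a ∩ f ⁻¹' S ∪ {a}),
            ENNReal.ofReal |f' x| * g (f x) := lintegral_mono_set hcover
      _ ≤ (F.card + 1) * (∫⁻ y in S, g y) + ((∫⁻ y in S, g y) + 0) := by
        refine (lintegral_union_le _ _ _).trans (add_le_add hleft ?_)
        refine (lintegral_union_le _ _ _).trans (add_le_add hright (le_of_eq ?_))
        exact setLIntegral_measure_zero _ _ (measure_singleton a)
      _ = ((insert a F).card + 1) * ∫⁻ y in S, g y := by
        rw [Finset.card_insert_of_notMem fun h => (hlt a h).false]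
        push_cast; ring

end ChangeOfVariables

theorem lintegral_Ioo_rpow_four_sub_sq_lt_top {s : ℝ} (hs0 : 0 ≤ s) (hs1 : s < 1) :
    ∫⁻ y in Ioo (-2 : ℝ) 2, ENNReal.ofReal ((4 - y ^ 2) ^ (-s)) < ∞ := by
  have hrpow := intervalIntegral.intervalIntegrable_rpow' (a := 0) (b := 4) (by linarith : -1 < -s)
  have hleft : IntegrableOn (fun y : ℝ => (2 - y) ^ (-s)) (Ioo (-2) 2) := by
    have := (hrpow.comp_sub_left 2).symm
    norm_num at this
    exact (intervalIntegrable_iff_integrableOn_Ioo_of_le (by norm_num)).mp this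
  have hright : IntegrableOn (fun y : ℝ => (2 + y) ^ (-s)) (Ioo (-2) 2) := by
    have := hrpow.comp_add_left 2
    norm_num at this
    exact (intervalIntegrable_iff_integrableOn_Ioo_of_le (by norm_num)).mp this
  refine Integrable.lintegral_lt_top ((hleft.add hright).mono'
    (by fun_prop : Measurable fun y : ℝ => (4 - y ^ 2) ^ (-s)).aestronglyMeasurable ?_)
  refine (ae_restrict_iff' measurableSet_Ioo).mpr (ae_of_all _ fun y ⟨hy1, hy2⟩ => ?_)
  rw [Real.norm_of_nonneg (Real.rpow_nonneg (by nlinarith) _)]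
  have hpos : ∀ z : ℝ, 0 ≤ z → 0 ≤ z ^ (-s) := fun z hz => Real.rpow_nonneg hz _
  rcases le_total y 0 with hy | hy
  · exact (Real.rpow_le_rpow_of_nonpos (by linarith) (by nlinarith) (by linarith)).trans
      (le_add_of_nonneg_left (hpos _ (by linarith)))
  · exact (Real.rpow_le_rpow_of_nonpos (by linarith) (by nlinarith) (by linarith)).trans
      (le_add_of_nonneg_right (hpos _ (by linarith)))

theorem rpow_div_mul_sqrt_le {a M c w t : ℝ} (ha : 0 ≤ a) (haM : a ≤ M) (hc : 1 ≤ c)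
    (hw : 0 < w) (ht : 1 ≤ t) :
    (a / (c * √w)) ^ t ≤ M ^ (t - 1) * (a * w ^ (-(t / 2))) := by
  have hsqrt : 0 < √w := Real.sqrt_pos.mpr hw
  have hsplit : a ^ t = a ^ (t - 1) * a := by
    conv_lhs => rw [← sub_add_cancel t 1]
    rw [Real.rpow_add' ha (by linarith : (0 : ℝ) < t - 1 + 1).ne', Real.rpow_one]
  calc (a / (c * √w)) ^ t ≤ (a / √w) ^ t := by
        refine Real.rpow_le_rpow (by positivity) ?_ (by linarith)
        exact div_le_div_of_nonneg_left ha hsqrt (le_mul_of_one_le_left hsqrt.le hc)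
    _ = a ^ (t - 1) * a * w ^ (-(t / 2)) := by
        rw [Real.div_rpow ha hsqrt.le, Real.sqrt_eq_rpow, ← Real.rpow_mul hw.le, div_eq_mul_inv,
          ← Real.rpow_neg hw.le, hsplit, show -(1 / 2 * t) = -(t / 2) by ring]
    _ ≤ M ^ (t - 1) * (a * w ^ (-(t / 2))) := by
        rw [mul_assoc]
        gcongr

theorem setLIntegral_band_le {f : ℝ → ℝ} (hf : Differentiable ℝ f) (F : Finset ℝ)
    (hF : ∀ x ∉ F, deriv f x ≠ 0) {M c t : ℝ} (hM : ∀ x, |f x| < 2 → |deriv f x| ≤ M)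
    (hc : 1 ≤ c) (ht : 1 ≤ t) :
    ∫⁻ x in {x | |f x| < 2}, ENNReal.ofReal ((|deriv f x| / (c * √(4 - f x ^ 2))) ^ t) ≤
      ENNReal.ofReal (M ^ (t - 1)) * ((F.card + 1) *
        ∫⁻ y in Ioo (-2 : ℝ) 2, ENNReal.ofReal ((4 - y ^ 2) ^ (-(t / 2)))) := by
  have hset : {x | |f x| < 2} = univ ∩ f ⁻¹' Ioo (-2) 2 := by ext; simp [abs_lt]
  have hmeas : MeasurableSet {x | |f x| < 2} :=
    measurableSet_lt hf.continuous.abs.measurable measurable_const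
  calc ∫⁻ x in {x | |f x| < 2}, ENNReal.ofReal ((|deriv f x| / (c * √(4 - f x ^ 2))) ^ t)
      ≤ ∫⁻ x in {x | |f x| < 2}, ENNReal.ofReal (M ^ (t - 1)) *
          (ENNReal.ofReal |deriv f x| * ENNReal.ofReal ((4 - f x ^ 2) ^ (-(t / 2)))) := by
        refine setLIntegral_mono' hmeas fun x (hx : |f x| < 2) => ?_
        have hw : 0 < 4 - f x ^ 2 := by
          have := abs_lt.mp hx; nlinarith
        have haM := hM x hx
        rw [← ENNReal.ofReal_mul (abs_nonneg _),
          ← ENNReal.ofReal_mul (Real.rpow_nonneg ((abs_nonneg _).trans haM) _)]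
        exact ENNReal.ofReal_le_ofReal (rpow_div_mul_sqrt_le (abs_nonneg _) haM hc hw ht)
    _ = ENNReal.ofReal (M ^ (t - 1)) * ∫⁻ x in {x | |f x| < 2},
          ENNReal.ofReal |deriv f x| * ENNReal.ofReal ((4 - f x ^ 2) ^ (-(t / 2))) :=
        lintegral_const_mul' _ _ ENNReal.ofReal_ne_top
    _ ≤ _ := by
        rw [hset]
        gcongr
        exact setLIntegral_abs_deriv_mul_comp_le_card_add_one (fun x => (hf x).hasDerivAt)
          convex_univ MeasurableSet.univ measurableSet_Ioo F (fun x _ hx => hF x hx)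
          fun y => ENNReal.ofReal ((4 - y ^ 2) ^ (-(t / 2)))

theorem statement9
    (t : ℝ) (ht : 1 < t ∧ t < 2) (p : ℕ) (hp : 1 ≤ p) (R : ℝ) :
    ∃ D : ℝ, ∀ V : ℤ → ℝ, (∀ n : ℤ, V (n + p) = V n) → (∀ n : ℤ, |V n| ≤ R) →
      ∫⁻ E in {E : ℝ | |discriminant V p E| < 2},
        ENNReal.ofReal
          ((|deriv (discriminant V p) E| /
            (p * Real.sqrt (4 - discriminant V p E ^ 2))) ^ t)
        ≤ ENNReal.ofReal D := by
  obtain ⟨M, hM⟩ := exists_abs_deriv_discriminant_le hp R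
  set I := ∫⁻ y in Ioo (-2 : ℝ) 2, ENNReal.ofReal ((4 - y ^ 2) ^ (-(t / 2)))
  have hI : I ≠ ∞ := (lintegral_Ioo_rpow_four_sub_sq_lt_top (by linarith) (by linarith)).ne
  refine ⟨(ENNReal.ofReal (M ^ (t - 1)) * ((p + 1) * I)).toReal, fun V _ hV => ?_⟩
  obtain ⟨F, hFcard, hF⟩ := exists_finset_deriv_discriminant_ne_zero V hp
  rw [ENNReal.ofReal_toReal (by finiteness)]
  calc _ ≤ ENNReal.ofReal (M ^ (t - 1)) * ((F.card + 1) * I) :=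
        setLIntegral_band_le (fun E => (hasDerivAt_discriminant V p E).differentiableAt) F hF
          (hM V hV) (by exact_mod_cast hp) ht.1.le
    _ ≤ ENNReal.ofReal (M ^ (t - 1)) * ((p + 1) * I) := by gcongr
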